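/- In type Dₙ with n ≥ 4, the collection labeled by a suffix beginning with s_{n,1}s_{n-1,j₂}⋯ (i.e., whose first segment descends all the way to 1 and which has at least two segments) contains exactly one homogeneous word, namely the suffix itself with empty prefix. Hence every collection in the packet P(n,0) has exactly 1 = C(n,0) element. -/

import Mathlib

/-- Letters `i` and `j` (from `{1, …, n}`) are neighbors in the `Dₙ` Dynkin diagram:
`1 – 2 – ⋯ – (n-2)` is a path, and both `n-1` and `n` are adjacent to `n-2`. -/
def dnAdj (n i j : ℕ) : Prop :=
  (i + 1 = j ∧ j ≤ n - 1) ∨ (j + 1 = i ∧ i ≤ n - 1) ∨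
  (i = n ∧ j = n - 2) ∨ (j = n ∧ i = n - 2)

/-- A word `w` is homogeneous (with respect to a neighbor relation `adj`): whenever the same
letter appears in positions `r < s`, there are positions `t, u` with `r < t < u < s` whose
letters are both neighbors of that letter. -/
def Homog {α : Type*} (adj : α → α → Prop) (w : List α) : Prop :=
  ∀ r s : Fin w.length, (r : ℕ) < s → w.get r = w.get s →
    ∃ t u : Fin w.length, (r : ℕ) < t ∧ (t : ℕ) < u ∧ (u : ℕ) < s ∧
      adj (w.get r) (w.get t) ∧ adj (w.get r) (w.get u)

/-- The descending word `[a, a-1, …, b]` (empty if `a < b`). -/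
def desc (a b : ℕ) : List ℕ := (List.range (a + 1 - b)).map (fun t => a - t)

/-- The suffix word `s_{n,j₁} s_{n-1,j₂} s_{n,j₃} ⋯` of type `Dₙ` determined by the indices
`j₁ < j₂ < ⋯ < j_ℓ`; the boolean records whether the next segment starts with `n` (`true`)
or with `n-1` (`false`). -/
def suffixWord (n : ℕ) : Bool → List ℕ → List ℕ
  | _, [] => []
  | b, j :: js => ((if b then n else n - 1) :: desc (n - 2) j) ++ suffixWord n (!b) js

/-- Validity of the indices `j₁ < j₂ < ⋯ < j_ℓ` of a suffix: strictly increasing and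
contained in `{1, …, n-1}`. -/
def ValidSuffixIdx (n : ℕ) (js : List ℕ) : Prop :=
  js.Chain' (· < ·) ∧ ∀ j ∈ js, 1 ≤ j ∧ j ≤ n - 1

/-- The prefix word `s_{1,i₁} s_{2,i₂} ⋯ s_{n-1,i_{n-1}}` where `s_{k,i} = [k, k-1, …, i]`. -/
def prefixWord (n : ℕ) (i : ℕ → ℕ) : List ℕ :=
  (List.range (n - 1)).flatMap (fun k => desc (k + 1) (i (k + 1)))

/-- Validity of the indices of a prefix: `1 ≤ i_k ≤ k + 1` for `1 ≤ k ≤ n-1`. -/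
def ValidPrefixIdx (n : ℕ) (i : ℕ → ℕ) : Prop :=
  ∀ k, 1 ≤ k → k ≤ n - 1 → 1 ≤ i k ∧ i k ≤ k + 1

/-- The collection labeled by a suffix `suf`: all homogeneous canonical words of type `Dₙ`
with suffix `suf`. -/
def collection (n : ℕ) (suf : List ℕ) : Set (List ℕ) :=
  {w | ∃ i, ValidPrefixIdx n i ∧ w = prefixWord n i ++ suf ∧ Homog (dnAdj n) w}

/-! The suffix word `w'` is homogeneous: inside a segment `s_{n,j}` or `s_{n-1,j}` consecutive
letters are neighbours, and a letter that recurs in a later segment has a neighbour right after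
it in its own segment and one at the start of the next segment, before its next occurrence.
Conversely, a nonempty prefix ends in some letter `m ∈ {1, …, n-1}`, and `w'` begins with
`n, n-2, …, 1, n-1`: the letters before the next `m` are distinct and contain at most one
neighbour of `m`, so `w₀ · w'` is not homogeneous. -/

section Homogeneity

variable {α : Type*} {adj : α → α → Prop} {w : List α}

theorem homog_iff_getElem :
    Homog adj w ↔ ∀ (r s : ℕ) (_ : r < s) (_ : s < w.length), w[r] = w[s] →
      ∃ t u, ∃ (_ : r < t) (_ : t < u) (_ : u < s), adj w[r] w[t] ∧ adj w[r] w[u] := by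
  simp only [Homog, Fin.forall_iff, Fin.exists_iff, List.get_eq_getElem]
  constructor
  · intro H r s hrs hs heq
    obtain ⟨t, ht, u, hu, hrt, htu, hus, h⟩ := H r (by omega) s hs hrs heq
    exact ⟨t, u, hrt, htu, hus, h⟩
  · intro H r hr s hs hrs heq
    obtain ⟨t, u, hrt, htu, hus, h⟩ := H r s hrs hs heq
    exact ⟨t, by omega, u, by omega, hrt, htu, hus, h⟩

theorem homog_of_nodup (hw : w.Nodup) : Homog adj w := fun _ _ hrs heq =>
  absurd (hw.get_inj_iff.1 heq) (Fin.ne_of_lt hrs)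

theorem not_homog_of_eq_append {x y z : List α} {a : α} (hw : w = x ++ a :: (y ++ a :: z))
    (hy : y.Nodup) (hnb : {b | b ∈ y ∧ adj a b}.Subsingleton) : ¬Homog adj w := by
  subst hw
  intro H
  obtain ⟨t, u, hrt, htu, hus, ht, hu⟩ :=
    homog_iff_getElem.1 H x.length (x.length + (y.length + 1)) (by omega) (by simp)
      (by simp [List.getElem_append_right])
  obtain ⟨k, rfl⟩ : ∃ k, t = x.length + (k + 1) := ⟨t - x.length - 1, by omega⟩
  obtain ⟨l, rfl⟩ : ∃ l, u = x.length + (l + 1) := ⟨u - x.length - 1, by omega⟩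
  simp only [Std.le_refl, List.getElem_append_right, tsub_self, List.getElem_cons_zero,
    le_add_iff_nonneg_right, zero_le, add_tsub_cancel_left, List.getElem_cons_succ,
    List.getElem_append_left (show k < y.length by omega),
    List.getElem_append_left (show l < y.length by omega)] at ht hu
  have := hy.getElem_inj_iff.1 (hnb ⟨List.getElem_mem _, ht⟩ ⟨List.getElem_mem _, hu⟩)
  omega

theorem Homog.append {u v : List α} (hu : Homog adj u) (hv : Homog adj v)
    (huv : ∀ x y₁ a y₂ z, u = x ++ a :: y₁ → v = y₂ ++ a :: z →
      (∃ b ∈ y₁, adj a b) ∧ ∃ c ∈ y₂, adj a c) :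
    Homog adj (u ++ v) := by
  rw [homog_iff_getElem] at hu hv ⊢
  intro r s hrs hs heq
  simp only [List.length_append] at hs
  rcases lt_or_ge s u.length with hsu | hsu
  · simp only [List.getElem_append_left hsu, List.getElem_append_left (hrs.trans hsu)] at heq ⊢
    obtain ⟨t, t', hrt, htt', hts, h⟩ := hu r s hrs hsu heq
    refine ⟨t, t', hrt, htt', hts, ?_⟩
    simpa [List.getElem_append_left (htt'.trans (hts.trans hsu)),
      List.getElem_append_left (hts.trans hsu)] using h
  rcases lt_or_ge r u.length with hru | hru
  · set s' := s - u.length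
    have hs' : s' < v.length := by omega
    simp only [List.getElem_append_left hru, List.getElem_append_right hsu] at heq ⊢
    have hu' : u = u.take r ++ u[r] :: u.drop (r + 1) := by
      rw [← List.drop_eq_getElem_cons hru, List.take_append_drop]
    have hv' : v = v.take s' ++ u[r] :: v.drop (s' + 1) := by
      rw [heq, ← List.drop_eq_getElem_cons hs', List.take_append_drop]
    obtain ⟨⟨b, hb, hab⟩, ⟨c, hc, hac⟩⟩ := huv _ _ _ _ _ hu' hv'
    obtain ⟨i, hi, rfl⟩ := List.mem_iff_getElem.1 hb
    obtain ⟨j, hj, rfl⟩ := List.mem_iff_getElem.1 hc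
    simp only [List.length_drop, List.length_take] at hi hj
    refine ⟨r + 1 + i, u.length + j, by omega, by omega, by omega, ?_⟩
    simp only [List.getElem_drop, List.getElem_take] at hab hac
    simpa [List.getElem_append_left (show r + 1 + i < u.length by omega)] using ⟨hab, hac⟩
  · simp only [List.getElem_append_right hsu, List.getElem_append_right hru] at heq ⊢
    obtain ⟨t, t', hrt, htt', hts, h⟩ :=
      hv (r - u.length) (s - u.length) (by omega) (by omega) heq
    refine ⟨u.length + t, u.length + t', by omega, by omega, by omega, ?_⟩
    simpa using h

end Homogeneity

namespace List

variable {α : Type*}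

theorem isPrefix_of_append_eq_append_cons {p q y z : List α} {a : α}
    (h : p ++ q = y ++ a :: z) (ha : a ∉ p) : p <+: y := by
  rcases append_eq_append_iff.1 h with ⟨y', rfl, -⟩ | ⟨p', rfl, hq⟩
  · exact prefix_append _ _
  · cases p' with
    | nil => simp
    | cons b p' =>
      obtain ⟨rfl, -⟩ := cons_eq_cons.1 hq
      simp at ha

theorem mem_of_pairwise_gt_of_lt [Preorder α] {x y : List α} {a c : α}
    (h : (x ++ a :: y).Pairwise (· > ·)) (hc : c ∈ x ++ a :: y) (hca : c < a) : c ∈ y := by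
  rw [pairwise_append] at h
  rcases mem_append.1 hc with hcx | hcy
  · exact absurd (h.2.2 c hcx a mem_cons_self) (lt_asymm hca)
  · exact (mem_cons.1 hcy).resolve_left hca.ne

end List

theorem mem_desc {a b m : ℕ} : m ∈ desc a b ↔ b ≤ m ∧ m ≤ a := by
  simp only [desc, List.mem_map, List.mem_range]
  constructor
  · rintro ⟨t, ht, rfl⟩
    omega
  · rintro ⟨hbm, hma⟩
    exact ⟨a - m, by omega, by omega⟩

theorem pairwise_gt_desc (a b : ℕ) : (desc a b).Pairwise (· > ·) := by
  simp only [desc, List.pairwise_map]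
  exact List.pairwise_lt_range.imp_of_mem fun hs ht hst => by
    simp only [List.mem_range] at hs ht
    omega

theorem desc_append {a b c : ℕ} (hbc : b ≤ c + 1) (hca : c ≤ a) :
    desc a b = desc a (c + 1) ++ desc c b := by
  have hlen : a + 1 - b = (a - c) + (c + 1 - b) := by omega
  simp only [desc, hlen, List.range_add, List.map_append, List.map_map]
  congr 1
  · rw [show a + 1 - (c + 1) = a - c by omega]
  · refine List.map_congr_left fun t _ => ?_
    simp only [Function.comp_apply]
    omega

theorem desc_eq_append_cons {a b m : ℕ} (hbm : b ≤ m) (hma : m ≤ a) (hm : 0 < m) :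
    desc a b = desc a (m + 1) ++ m :: desc (m - 1) b := by
  rw [desc_append (by omega) hma, desc_append (a := m) (c := m - 1) (by omega) (by omega),
    Nat.sub_add_cancel hm]
  simp [desc]

section TypeD

variable {n : ℕ}

def segmentHead (n : ℕ) (b : Bool) : ℕ := if b then n else n - 1

def suffixSegment (n : ℕ) (b : Bool) (j : ℕ) : List ℕ := segmentHead n b :: desc (n - 2) j

theorem suffixWord_cons (b : Bool) (j : ℕ) (js : List ℕ) :
    suffixWord n b (j :: js) = suffixSegment n b j ++ suffixWord n (!b) js := rfl

theorem segmentHead_mem_Icc (b : Bool) : segmentHead n b ∈ Set.Icc (n - 1) n := by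
  unfold segmentHead
  split <;> simp only [Set.mem_Icc] <;> omega

theorem segmentHead_injective (hn : 1 ≤ n) : Function.Injective (segmentHead n) := by
  intro b b' h
  cases b <;> cases b' <;> simp [segmentHead] at h ⊢ <;> omega

theorem mem_suffixSegment {b : Bool} {j m : ℕ} :
    m ∈ suffixSegment n b j ↔ m = segmentHead n b ∨ j ≤ m ∧ m ≤ n - 2 := by
  simp only [suffixSegment, List.mem_cons, mem_desc]

theorem pairwise_gt_suffixSegment (hn : 2 ≤ n) (b : Bool) (j : ℕ) :
    (suffixSegment n b j).Pairwise (· > ·) := by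
  have := (segmentHead_mem_Icc (n := n) b).1
  exact List.pairwise_cons.2 ⟨fun m hm => by rw [mem_desc] at hm; omega, pairwise_gt_desc _ _⟩

theorem exists_adj_mem_of_suffixSegment_eq_append {b : Bool} {j a : ℕ} {x y : List ℕ}
    (hn : 2 ≤ n) (hja : j < a) (hjn : j ≤ n - 2) (hseg : suffixSegment n b j = x ++ a :: y) :
    ∃ c ∈ y, dnAdj n a c := by
  have ha : a ∈ suffixSegment n b j := by simp [hseg]
  have hh := segmentHead_mem_Icc (n := n) b
  obtain ⟨c, hca, hc, hac⟩ : ∃ c < a, c ∈ suffixSegment n b j ∧ dnAdj n a c := by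
    simp only [mem_suffixSegment, Set.mem_Icc] at ha hh ⊢
    rcases le_or_gt a (n - 2) with han | han
    · exact ⟨a - 1, by omega, by omega, by unfold dnAdj; omega⟩
    · exact ⟨n - 2, by omega, by omega, by unfold dnAdj; omega⟩
  rw [hseg] at hc
  exact ⟨c, List.mem_of_pairwise_gt_of_lt (hseg ▸ pairwise_gt_suffixSegment hn b j) hc hca,
    hac⟩

theorem exists_adj_mem_of_suffixSegment_append_eq {b : Bool} {j a : ℕ} {q y z : List ℕ}
    (hah : a ≠ segmentHead n b) (han : a ≤ n) (hja : j ≤ a) (hjn : j ≤ n - 2)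
    (hv : suffixSegment n b j ++ q = y ++ a :: z) : ∃ c ∈ y, dnAdj n a c := by
  have hh := segmentHead_mem_Icc (n := n) b
  rw [Set.mem_Icc] at hh
  rcases le_or_gt a (n - 2) with han2 | han2
  · rw [suffixSegment, desc_append (c := a) (by omega) han2, ← List.cons_append,
      List.append_assoc] at hv
    have hpre := List.isPrefix_of_append_eq_append_cons hv (by simp [mem_desc]; omega)
    rcases han2.lt_or_eq with han2 | rfl
    · exact ⟨a + 1, hpre.subset (by simp [mem_desc]; omega), by unfold dnAdj; omega⟩
    · exact ⟨segmentHead n b, hpre.subset List.mem_cons_self, by unfold dnAdj; omega⟩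
  · have hpre := List.isPrefix_of_append_eq_append_cons hv (by simp [mem_suffixSegment]; omega)
    exact ⟨n - 2, hpre.subset (by simp [mem_suffixSegment]; omega), by unfold dnAdj; omega⟩

theorem le_of_mem_suffixWord {b : Bool} {j m : ℕ} {js : List ℕ}
    (hjs : (j :: js).Pairwise (· < ·)) (hm : m ∈ suffixWord n b (j :: js)) (hmn : m < n - 1) :
    j ≤ m := by
  induction js generalizing b j with
  | nil =>
    rw [suffixWord_cons, suffixWord, List.append_nil, mem_suffixSegment] at hm
    have := (segmentHead_mem_Icc (n := n) b).1
    omega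
  | cons j' js ih =>
    rw [suffixWord_cons, List.mem_append, mem_suffixSegment] at hm
    have := (segmentHead_mem_Icc (n := n) b).1
    rcases hm with hm | hm
    · omega
    · exact ((List.pairwise_cons.1 hjs).1 j' List.mem_cons_self).le.trans
        (ih (List.pairwise_cons.1 hjs).2 hm)

theorem exists_adj_mem_of_suffixSegment_eq_append_of_suffixWord_eq_append
    {j j' a : ℕ} {b : Bool} {js x y₁ y₂ z : List ℕ}
    (hjs : (j :: j' :: js).Pairwise (· < ·)) (hbound : ∀ k ∈ j' :: js, k ≤ n - 1)
    (hu : suffixSegment n b j = x ++ a :: y₁)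
    (hv : suffixWord n (!b) (j' :: js) = y₂ ++ a :: z) :
    (∃ c ∈ y₁, dnAdj n a c) ∧ ∃ c ∈ y₂, dnAdj n a c := by
  have hjj' : j < j' := (List.pairwise_cons.1 hjs).1 j' List.mem_cons_self
  have hn : 2 ≤ n := by have := hbound j' List.mem_cons_self; omega
  have hh := segmentHead_mem_Icc (n := n) b
  have hh' := segmentHead_mem_Icc (n := n) !b
  have hne := (segmentHead_injective (n := n) (by omega)).ne (Bool.not_ne_self b)
  rw [Set.mem_Icc] at hh hh'
  have ha : a ∈ suffixSegment n b j := by simp [hu]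
  have hav : a ∈ suffixWord n (!b) (j' :: js) := by simp [hv]
  rw [mem_suffixSegment] at ha
  obtain ⟨hj'a, hj'n⟩ : j' ≤ a ∧ j' ≤ n - 2 := by
    rcases lt_or_ge a (n - 1) with han | han
    · have := le_of_mem_suffixWord (List.pairwise_cons.1 hjs).2 hav han
      omega
    · rw [suffixWord_cons, List.mem_append, mem_suffixSegment] at hav
      cases js with
      | nil =>
        simp only [suffixWord, List.not_mem_nil, or_false] at hav
        omega
      | cons j'' js =>
        have := (List.pairwise_cons.1 (List.pairwise_cons.1 hjs).2).1 j'' List.mem_cons_self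
        have := hbound j'' (by simp)
        omega
  rw [suffixWord_cons] at hv
  exact ⟨exists_adj_mem_of_suffixSegment_eq_append hn (by omega) (by omega) hu,
    exists_adj_mem_of_suffixSegment_append_eq (by omega) (by omega) hj'a hj'n hv⟩

theorem homog_suffixWord {js : List ℕ} (hjs : ValidSuffixIdx n js) (b : Bool) :
    Homog (dnAdj n) (suffixWord n b js) := by
  obtain ⟨hchain, hbound⟩ := hjs
  replace hchain := List.isChain_iff_pairwise.1 hchain
  induction js generalizing b with
  | nil => exact homog_of_nodup List.nodup_nil
  | cons j js ih =>
    have hn : 2 ≤ n := by have := hbound j List.mem_cons_self; omega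
    rw [suffixWord_cons]
    refine (homog_of_nodup (pairwise_gt_suffixSegment hn b j).nodup).append
      (ih _ (fun k hk => hbound k (List.mem_cons_of_mem _ hk)) (List.pairwise_cons.1 hchain).2) ?_
    intro x y₁ a y₂ z hu hv
    cases js with
    | nil => simp [suffixWord] at hv
    | cons j' js =>
      exact exists_adj_mem_of_suffixSegment_eq_append_of_suffixWord_eq_append hchain
        (fun k hk => (hbound k (List.mem_cons_of_mem _ hk)).2) hu hv

theorem mem_prefixWord {m : ℕ} {i : ℕ → ℕ} (hi : ValidPrefixIdx n i)
    (hm : m ∈ prefixWord n i) : 1 ≤ m ∧ m ≤ n - 1 := by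
  simp only [prefixWord, List.mem_flatMap, List.mem_range, mem_desc] at hm
  obtain ⟨k, hk, hm⟩ := hm
  have := hi (k + 1) (by omega) (by omega)
  omega

theorem validPrefixIdx_add_one : ValidPrefixIdx n (· + 1) :=
  fun k _ _ => ⟨Nat.le_add_left 1 k, le_rfl⟩

theorem prefixWord_add_one : prefixWord n (· + 1) = [] := by
  simp [prefixWord, desc]

theorem suffixWord_one_eq_append_cons {m j : ℕ} {js : List ℕ} (hm : 1 ≤ m)
    (hmn : m ≤ n - 1) : ∃ y z, suffixWord n true (1 :: j :: js) = y ++ m :: z ∧ y.Nodup ∧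
      {c | c ∈ y ∧ dnAdj n m c}.Subsingleton := by
  have hsuf : suffixWord n true (1 :: j :: js) =
      n :: desc (n - 2) 1 ++ (n - 1) :: (desc (n - 2) j ++ suffixWord n true js) := rfl
  obtain ⟨k, z, hk, hsuf⟩ : ∃ k z, (k = m + 1 ∨ m = n - 1 ∧ k = 1) ∧
      suffixWord n true (1 :: j :: js) = (n :: desc (n - 2) k) ++ m :: z := by
    rcases le_or_gt m (n - 2) with hm2 | hm2
    · refine ⟨m + 1, desc (m - 1) 1 ++ (n - 1) :: (desc (n - 2) j ++ suffixWord n true js),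
        .inl rfl, ?_⟩
      rw [hsuf, desc_eq_append_cons hm hm2 hm]
      simp
    · refine ⟨1, desc (n - 2) j ++ suffixWord n true js, .inr ⟨by omega, rfl⟩, ?_⟩
      rw [hsuf, show m = n - 1 by omega, List.cons_append]
  refine ⟨_, z, hsuf, (pairwise_gt_suffixSegment (b := true) (by omega) k).nodup, ?_⟩
  rintro b ⟨hb, hmb⟩ c ⟨hc, hmc⟩
  simp only [List.mem_cons, mem_desc] at hb hc
  unfold dnAdj at hmb hmc
  omega

end TypeD

theorem packet_zero_collection_general (n : ℕ) (js : List ℕ)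
    (hjs : ValidSuffixIdx n js) (hhead : js.head? = some 1) (hlen : 2 ≤ js.length) :
    collection n (suffixWord n true js) = {suffixWord n true js} := by
  rcases js with _ | ⟨j₁, _ | ⟨j₂, js⟩⟩
  · simp at hlen
  · simp at hlen
  obtain rfl : j₁ = 1 := by simpa using hhead
  ext w
  constructor
  · rintro ⟨i, hi, rfl, hw⟩
    rcases (prefixWord n i).eq_nil_or_concat with hp | ⟨p, m, hp⟩
    · simp [hp]
    rw [List.concat_eq_append] at hp
    obtain ⟨hm, hmn⟩ := mem_prefixWord hi (hp ▸ List.mem_concat_self ..)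
    obtain ⟨y, z, hsuf, hy, hnb⟩ := suffixWord_one_eq_append_cons (j := j₂) (js := js) hm hmn
    exact (not_homog_of_eq_append (x := p) (z := z) (by simp [hp, hsuf]) hy hnb hw).elim
  · rintro rfl
    exact ⟨_, validPrefixIdx_add_one, by rw [prefixWord_add_one, List.nil_append],
      homog_suffixWord hjs true⟩

/-- For `n ≥ 4`, the collection labeled by a suffix whose first segment descends all the way
to `1` and which has at least two segments contains exactly one homogeneous word: the suffix
itself (with empty prefix). In particular every collection in the packet `P(n,0)` has
exactly `1 = C(n,0)` element. -/
theorem packet_zero_collection (n : ℕ) (hn : 4 ≤ n) (js : List ℕ)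
    (hjs : ValidSuffixIdx n js) (hhead : js.head? = some 1) (hlen : 2 ≤ js.length) :
    collection n (suffixWord n true js) = {suffixWord n true js} :=
  packet_zero_collection_general n js hjs hhead hlen
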